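/- Let a₀ < b₀ < a₁ < b₁ be real numbers and R(x) = (x − a₀)(x − b₀)(x − a₁)(x − b₁). If p(z) = (z − x₁)(z − x₂) is a monic real quadratic polynomial satisfying ∫_{a₀}^{b₀} p(x)/|R(x)|^{1/2} dx = 0 and ∫_{a₁}^{b₁} p(x)/|R(x)|^{1/2} dx = 0, then x₁ + x₂ = (a₀ + b₀ + a₁ + b₁)/2 (equivalently, the coefficient of z in p equals −(a₀ + b₀ + a₁ + b₁)/2). -/

import Mathlib

set_option maxHeartbeats 1600000

open MeasureTheory Set intervalIntegral

private lemma invsqrt_int (c e : ℝ) (h : c < e) :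
    IntervalIntegrable (fun x => 1 / Real.sqrt ((x - c) * (e - x))) volume c e := by
  have mble : Measurable (fun x : ℝ => 1 / Real.sqrt ((x - c) * (e - x))) := by
    exact measurable_const.div
      (Real.continuous_sqrt.comp (by continuity)).measurable
  set m := (c + e) / 2 with hm
  have hcm : c < m := by rw [hm]; linarith
  have hme : m < e := by rw [hm]; linarith
  -- piece on [c, m]
  have p1 : IntervalIntegrable (fun x => 1 / Real.sqrt ((x - c) * (e - x))) volume c m := by
    have base : IntervalIntegrable (fun x : ℝ => x ^ (-(1:ℝ)/2)) volume 0 (m - c) :=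
      intervalIntegrable_rpow' (by norm_num)
    have shift : IntervalIntegrable (fun x : ℝ => (x - c) ^ (-(1:ℝ)/2)) volume c m := by
      have := base.comp_sub_right c
      simpa using this
    have dom : IntervalIntegrable
        (fun x : ℝ => Real.sqrt (2 / (e - c)) * (x - c) ^ (-(1:ℝ)/2)) volume c m :=
      shift.const_mul _
    refine dom.mono_fun' mble.aestronglyMeasurable ?_
    filter_upwards [ae_restrict_mem measurableSet_uIoc] with x hx
    rw [uIoc_of_le hcm.le] at hx
    obtain ⟨hxc, hxm⟩ := hx
    have hxc' : 0 < x - c := by linarith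
    have hex : (e - c) / 2 ≤ e - x := by rw [hm] at hxm; linarith
    have hec : 0 < (e - c) / 2 := by linarith
    have key : Real.sqrt ((x - c) * ((e - c) / 2)) ≤ Real.sqrt ((x - c) * (e - x)) := by
      apply Real.sqrt_le_sqrt; nlinarith
    have pos1 : 0 < Real.sqrt ((x - c) * ((e - c) / 2)) := by
      apply Real.sqrt_pos.2; positivity
    have hnorm : ‖1 / Real.sqrt ((x - c) * (e - x))‖
        = 1 / Real.sqrt ((x - c) * (e - x)) := by
      rw [Real.norm_eq_abs, abs_of_nonneg]; positivity
    rw [hnorm]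
    have step1 : 1 / Real.sqrt ((x - c) * (e - x))
        ≤ 1 / Real.sqrt ((x - c) * ((e - c) / 2)) :=
      one_div_le_one_div_of_le pos1 key
    refine step1.trans (le_of_eq ?_)
    rw [Real.sqrt_mul hxc'.le]
    have e1 : (x - c) ^ (-(1:ℝ)/2) = 1 / Real.sqrt (x - c) := by
      rw [show (-(1:ℝ)/2) = -(1/2) by norm_num, Real.rpow_neg hxc'.le,
        ← Real.sqrt_eq_rpow, one_div]
    have e2 : Real.sqrt (2 / (e - c)) = 1 / Real.sqrt ((e - c) / 2) := by
      rw [show 2 / (e - c) = ((e - c) / 2)⁻¹ by field_simp, Real.sqrt_inv, one_div]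
    rw [e1, e2]
    ring
  have p2 : IntervalIntegrable (fun x => 1 / Real.sqrt ((x - c) * (e - x))) volume m e := by
    have flip := p1.comp_sub_left (c + e)
    have : (fun x : ℝ => 1 / Real.sqrt ((c + e - x - c) * (e - (c + e - x))))
        = fun x : ℝ => 1 / Real.sqrt ((x - c) * (e - x)) := by
      funext x; ring_nf
    rw [this] at flip
    have he : c + e - c = e := by ring
    have hmm : c + e - m = m := by rw [hm]; ring
    rw [he, hmm] at flip
    exact flip.symm
  exact p1.trans p2

private lemma weight_int (c e K : ℝ) (hce : c < e) (hK : 0 < K)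
    (g W : ℝ → ℝ) (hgm : Measurable g) (hg : ContinuousOn g (Icc c e))
    (hWc : Continuous W) (hWnn : ∀ x, 0 ≤ W x)
    (hlow : ∀ x ∈ Ioo c e, K * ((x - c) * (e - x)) ≤ (W x) ^ 2) :
    IntervalIntegrable (fun x => g x / W x) volume c e := by
  obtain ⟨M, hM⟩ := isCompact_Icc.exists_bound_of_continuousOn hg
  have hM0 : 0 ≤ M := le_trans (norm_nonneg _) (hM c (left_mem_Icc.2 hce.le))
  have dom : IntervalIntegrable
      (fun x => (M / Real.sqrt K) * (1 / Real.sqrt ((x - c) * (e - x)))) volume c e :=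
    (invsqrt_int c e hce).const_mul _
  refine dom.mono_fun' ((hgm.div hWc.measurable).aestronglyMeasurable) ?_
  have h1 : ∀ᵐ (x : ℝ) ∂volume, x ≠ e := by
    rw [ae_iff]
    simpa using measure_singleton (α := ℝ) e
  filter_upwards [ae_restrict_mem measurableSet_uIoc,
    h1.filter_mono (ae_mono Measure.restrict_le_self)] with x hx hne
  rw [uIoc_of_le hce.le] at hx
  have hxo : x ∈ Ioo c e := ⟨hx.1, lt_of_le_of_ne hx.2 hne⟩
  obtain ⟨hxc, hxe⟩ := hxo
  have h2 : 0 < (x - c) * (e - x) := by nlinarith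
  have h3 : Real.sqrt (K * ((x - c) * (e - x))) ≤ W x := by
    have := Real.sqrt_le_sqrt (hlow x ⟨hxc, hxe⟩)
    rwa [Real.sqrt_sq (hWnn x)] at this
  have h4 : 0 < Real.sqrt (K * ((x - c) * (e - x))) := Real.sqrt_pos.2 (by positivity)
  have hXm : x ∈ Icc c e := ⟨hxc.le, hxe.le⟩
  calc ‖g x / W x‖ = ‖g x‖ / W x := by
        rw [norm_div, Real.norm_eq_abs (W x), abs_of_nonneg (hWnn x)]
    _ ≤ M / Real.sqrt (K * ((x - c) * (e - x))) := div_le_div₀ hM0 (hM x hXm) h4 h3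
    _ = (M / Real.sqrt K) * (1 / Real.sqrt ((x - c) * (e - x))) := by
        rw [Real.sqrt_mul hK.le]; ring

private lemma band0_int (a₀ b₀ a₁ b₁ : ℝ) (h₀ : a₀ < b₀) (h₁ : b₀ < a₁) (h₂ : a₁ < b₁)
    (g : ℝ → ℝ) (hgm : Measurable g) (hg : ContinuousOn g (Icc a₀ b₀)) :
    IntervalIntegrable
      (fun x => g x / Real.sqrt |(x - a₀) * (x - b₀) * (x - a₁) * (x - b₁)|)
      volume a₀ b₀ := by
  apply weight_int a₀ b₀ ((a₁ - b₀) * (b₁ - b₀)) h₀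
    (by nlinarith) g _ hgm hg
    (Real.continuous_sqrt.comp (by continuity)) (fun x => Real.sqrt_nonneg _)
  intro x hx
  obtain ⟨hx1, hx2⟩ := hx
  show _ ≤ Real.sqrt |(x - a₀) * (x - b₀) * (x - a₁) * (x - b₁)| ^ 2
  rw [Real.sq_sqrt (abs_nonneg _)]
  have f1 : 0 < x - a₀ := by linarith
  have f2 : 0 < b₀ - x := by linarith
  have f3 : 0 < a₁ - x := by linarith
  have f4 : 0 < b₁ - x := by linarith
  have hRneg : (x - a₀) * (x - b₀) * (x - a₁) * (x - b₁) < 0 := by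
    nlinarith [mul_pos (mul_pos (mul_pos f1 f2) f3) f4]
  rw [abs_of_neg hRneg]
  have h6 : (a₁ - b₀) * (b₁ - b₀) ≤ (a₁ - x) * (b₁ - x) := by nlinarith
  nlinarith [mul_le_mul_of_nonneg_left h6 (mul_pos f1 f2).le]

private lemma prod4 (A B C D d u v w z Δ : ℝ)
    (h1 : A * C = Δ) (h2 : B * D = Δ) :
    (A * u / d) * (B * v / d) * (C * w / d) * (D * z / d)
      = (Δ ^ 2 / d ^ 4) * (u * v * w * z) := by
  have : (A * u / d) * (B * v / d) * (C * w / d) * (D * z / d)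
      = ((A * C) * (B * D)) * (u * v * w * z) / d ^ 4 := by ring
  rw [this, h1, h2]
  ring

private lemma subst_int (a₀ b₀ a₁ b₁ : ℝ) (h₀ : a₀ < b₀) (h₁ : b₀ < a₁) (h₂ : a₁ < b₁)
    (f : ℝ → ℝ) :
    (∫ x in a₁..b₁, f x / Real.sqrt |(x - a₀) * (x - b₀) * (x - a₁) * (x - b₁)|)
      = ∫ x in a₀..b₀,
          f (((a₀ * a₁ - b₀ * b₁) * x + (b₀ * b₁ * (a₀ + a₁) - a₀ * a₁ * (b₀ + b₁)))
              / ((a₀ + a₁ - b₀ - b₁) * x - (a₀ * a₁ - b₀ * b₁)))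
            / Real.sqrt |(x - a₀) * (x - b₀) * (x - a₁) * (x - b₁)| := by
  set α : ℝ := a₀ * a₁ - b₀ * b₁ with hα
  set γ : ℝ := a₀ + a₁ - b₀ - b₁ with hγ
  set β : ℝ := b₀ * b₁ * (a₀ + a₁) - a₀ * a₁ * (b₀ + b₁) with hβ
  set Δ : ℝ := α ^ 2 + β * γ with hΔdef
  set φ : ℝ → ℝ := fun x => (α * x + β) / (γ * x - α) with hφ
  clear_value α γ β Δ φ
  -- positivity of the denominator on the band
  have hd : ∀ x ∈ Icc a₀ b₀, 0 < γ * x - α := by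
    intro x hx
    obtain ⟨hx1, hx2⟩ := hx
    have e1 : (γ * x - α) * (b₀ - a₀)
        = (b₀ - x) * ((a₀ - b₀) * (a₀ - b₁)) + (x - a₀) * ((b₀ - a₀) * (a₁ - b₀)) := by
      rw [hγ, hα]; ring
    have p1 : 0 < (a₀ - b₀) * (a₀ - b₁) := by nlinarith
    have p2 : 0 < (b₀ - a₀) * (a₁ - b₀) := by nlinarith
    nlinarith [mul_nonneg (by linarith : (0:ℝ) ≤ b₀ - x) p1.le,
      mul_nonneg (by linarith : (0:ℝ) ≤ x - a₀) p2.le]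
  have hΔ : Δ < 0 := by
    have : Δ = ((a₀ - b₀) * (a₀ - b₁)) * ((a₁ - b₀) * (a₁ - b₁)) := by
      rw [hΔdef, hα, hβ, hγ]; ring
    rw [this]
    have p1 : 0 < (a₀ - b₀) * (a₀ - b₁) := by nlinarith
    have p2 : (a₁ - b₀) * (a₁ - b₁) < 0 := by nlinarith
    nlinarith
  -- derivative of φ
  have hder : ∀ x ∈ Ioo a₀ b₀, HasDerivAt φ (-Δ / (γ * x - α) ^ 2) x := by
    intro x hx
    have hdx := hd x (Ioo_subset_Icc_self hx)
    have hnum : HasDerivAt (fun y : ℝ => α * y + β) α x := by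
      simpa using ((hasDerivAt_id x).const_mul α).add_const β
    have hden : HasDerivAt (fun y : ℝ => γ * y - α) γ x := by
      simpa using ((hasDerivAt_id x).const_mul γ).sub_const α
    have h := hnum.div hden hdx.ne'
    convert h using 1
    · rfl
    · rfl
    · rw [hφ]; rfl
    rw [div_eq_div_iff (by positivity) (by positivity), hΔdef]
    ring
  have hcont : ContinuousOn φ (Icc a₀ b₀) := by
    rw [hφ]
    apply ContinuousOn.div (by fun_prop) (by fun_prop)
    exact fun x hx => (hd x hx).ne'
  have hcont' := hcont
  have hmono : StrictMonoOn φ (Icc a₀ b₀) := by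
    apply strictMonoOn_of_deriv_pos (convex_Icc _ _) hcont
    intro x hx
    rw [interior_Icc] at hx
    rw [(hder x hx).deriv]
    have := hd x (Ioo_subset_Icc_self hx)
    have h2 : (0:ℝ) < (γ * x - α) ^ 2 := by positivity
    have h3 : (0:ℝ) < -Δ := by linarith
    exact div_pos h3 h2
  have hφa : φ a₀ = a₁ := by
    rw [hφ]
    rw [div_eq_iff (hd a₀ (left_mem_Icc.2 h₀.le)).ne']
    rw [hα, hβ, hγ]; ring
  have hφb : φ b₀ = b₁ := by
    rw [hφ]
    rw [div_eq_iff (hd b₀ (right_mem_Icc.2 h₀.le)).ne']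
    rw [hα, hβ, hγ]; ring
  have himg : φ '' (Ioo a₀ b₀) = Ioo a₁ b₁ := by
    apply Subset.antisymm
    · rintro y ⟨x, hx, rfl⟩
      exact ⟨hφa ▸ hmono (left_mem_Icc.2 h₀.le) (Ioo_subset_Icc_self hx) hx.1,
        hφb ▸ hmono (Ioo_subset_Icc_self hx) (right_mem_Icc.2 h₀.le) hx.2⟩
    · have := intermediate_value_Ioo h₀.le hcont
      rwa [hφa, hφb] at this
  rw [intervalIntegral.integral_of_le h₂.le, intervalIntegral.integral_of_le h₀.le,
    integral_Ioc_eq_integral_Ioo, integral_Ioc_eq_integral_Ioo, ← himg,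
    integral_image_eq_integral_abs_deriv_smul measurableSet_Ioo
      (fun x hx => (hder x hx).hasDerivWithinAt)
      (hmono.injOn.mono Ioo_subset_Icc_self)]
  apply setIntegral_congr_fun measurableSet_Ioo
  intro x hx
  have hdx := hd x (Ioo_subset_Icc_self hx)
  have hdx2 : (0:ℝ) < (γ * x - α) ^ 2 := by positivity
  have hmΔ : (0:ℝ) < -Δ := by linarith
  obtain ⟨hx1, hx2⟩ := hx
  have hRneg : (x - a₀) * (x - b₀) * (x - a₁) * (x - b₁) < 0 := by
    have f1 : 0 < x - a₀ := by linarith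
    have f2 : 0 < b₀ - x := by linarith
    have f3 : 0 < a₁ - x := by linarith
    have f4 : 0 < b₁ - x := by linarith
    nlinarith [mul_pos (mul_pos (mul_pos f1 f2) f3) f4]
  have hWpos : 0 < Real.sqrt |(x - a₀) * (x - b₀) * (x - a₁) * (x - b₁)| :=
    Real.sqrt_pos.2 (abs_pos.2 hRneg.ne)
  -- the key algebraic identity R(φ x) = (Δ²/dx⁴) R(x)
  have e0 : φ x - a₀ = (α - a₀ * γ) * (x - a₁) / (γ * x - α) := by
    rw [hφ, div_sub' hdx.ne']; congr 1; rw [hα, hγ, hβ]; ring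
  have e1 : φ x - b₀ = (α - b₀ * γ) * (x - b₁) / (γ * x - α) := by
    rw [hφ, div_sub' hdx.ne']; congr 1; rw [hα, hγ, hβ]; ring
  have e2 : φ x - a₁ = (α - a₁ * γ) * (x - a₀) / (γ * x - α) := by
    rw [hφ, div_sub' hdx.ne']; congr 1; rw [hα, hγ, hβ]; ring
  have e3 : φ x - b₁ = (α - b₁ * γ) * (x - b₀) / (γ * x - α) := by
    rw [hφ, div_sub' hdx.ne']; congr 1; rw [hα, hγ, hβ]; ring
  have c1 : (α - a₀ * γ) * (α - a₁ * γ) = Δ := by rw [hΔdef, hα, hγ, hβ]; ring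
  have c2 : (α - b₀ * γ) * (α - b₁ * γ) = Δ := by rw [hΔdef, hα, hγ, hβ]; ring
  have key2 : (φ x - a₀) * (φ x - b₀) * (φ x - a₁) * (φ x - b₁)
      = (Δ ^ 2 / (γ * x - α) ^ 4) * ((x - a₀) * (x - b₀) * (x - a₁) * (x - b₁)) := by
    rw [e0, e1, e2, e3, prod4 _ _ _ _ _ _ _ _ _ _ c1 c2]
    congr 1
    ring
  have habs : |(φ x - a₀) * (φ x - b₀) * (φ x - a₁) * (φ x - b₁)|
      = (Δ ^ 2 / (γ * x - α) ^ 4) * |(x - a₀) * (x - b₀) * (x - a₁) * (x - b₁)| := by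
    have hΔ2 : (0:ℝ) < Δ ^ 2 := by nlinarith
    rw [key2, abs_mul, abs_of_pos (div_pos hΔ2 (by positivity))]
  have hsq : Real.sqrt (Δ ^ 2 / (γ * x - α) ^ 4) = -Δ / (γ * x - α) ^ 2 := by
    have e4 : (-Δ / (γ * x - α) ^ 2) ^ 2 = Δ ^ 2 / (γ * x - α) ^ 4 := by
      rw [div_pow, neg_sq, ← pow_mul]
    rw [← e4]
    exact Real.sqrt_sq (div_pos hmΔ (by positivity)).le
  have hWφ : Real.sqrt |(φ x - a₀) * (φ x - b₀) * (φ x - a₁) * (φ x - b₁)|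
      = (-Δ / (γ * x - α) ^ 2) * Real.sqrt |(x - a₀) * (x - b₀) * (x - a₁) * (x - b₁)| := by
    rw [habs, Real.sqrt_mul (by positivity), hsq]
  have habs' : |(-Δ) / (γ * x - α) ^ 2| = -Δ / (γ * x - α) ^ 2 :=
    abs_of_pos (div_pos hmΔ (by positivity))
  show |(-Δ) / (γ * x - α) ^ 2| • (f (φ x) / _) = _
  rw [smul_eq_mul, habs', hWφ]
  rw [div_mul_eq_div_div_swap, mul_comm,
    div_mul_cancel₀ _ (ne_of_gt (div_pos hmΔ (by positivity)))]
  simp only [hφ]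

private lemma ftc_zero (a₀ b₀ a₁ b₁ : ℝ) (h₀ : a₀ < b₀) (h₁ : b₀ < a₁) (h₂ : a₁ < b₁) :
    (∫ x in a₀..b₀,
      (((a₀ + a₁ - b₀ - b₁) * x ^ 2 - 2 * (a₀ * a₁ - b₀ * b₁) * x
          - (b₀ * b₁ * (a₀ + a₁) - a₀ * a₁ * (b₀ + b₁)))
        * ((a₀ + a₁ - b₀ - b₁) * x ^ 2
            - ((a₀ + b₀ + a₁ + b₁) / 2) * (a₀ + a₁ - b₀ - b₁) * x
            + ((b₀ * b₁ * (a₀ + a₁) - a₀ * a₁ * (b₀ + b₁))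
                + ((a₀ + b₀ + a₁ + b₁) / 2) * (a₀ * a₁ - b₀ * b₁)))
        / ((a₀ + a₁ - b₀ - b₁) * x - (a₀ * a₁ - b₀ * b₁)) ^ 2)
        / Real.sqrt |(x - a₀) * (x - b₀) * (x - a₁) * (x - b₁)|) = 0 := by
  set α : ℝ := a₀ * a₁ - b₀ * b₁ with hα
  set γ : ℝ := a₀ + a₁ - b₀ - b₁ with hγ
  set β : ℝ := b₀ * b₁ * (a₀ + a₁) - a₀ * a₁ * (b₀ + b₁) with hβ
  set s₀ : ℝ := (a₀ + b₀ + a₁ + b₁) / 2 with hs₀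
  clear_value α γ β s₀
  have hd : ∀ x ∈ Icc a₀ b₀, 0 < γ * x - α := by
    intro x hx
    obtain ⟨hx1, hx2⟩ := hx
    have e1 : (γ * x - α) * (b₀ - a₀)
        = (b₀ - x) * ((a₀ - b₀) * (a₀ - b₁)) + (x - a₀) * ((b₀ - a₀) * (a₁ - b₀)) := by
      rw [hγ, hα]; ring
    have p1 : 0 < (a₀ - b₀) * (a₀ - b₁) := by nlinarith
    have p2 : 0 < (b₀ - a₀) * (a₁ - b₀) := by nlinarith
    nlinarith [mul_nonneg (by linarith : (0:ℝ) ≤ b₀ - x) p1.le,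
      mul_nonneg (by linarith : (0:ℝ) ≤ x - a₀) p2.le]
  set H : ℝ → ℝ :=
    fun x => -γ * Real.sqrt (-((x - a₀) * (x - b₀) * (x - a₁) * (x - b₁))) / (γ * x - α)
    with hH
  have hint : IntervalIntegrable
      (fun x => ((γ * x ^ 2 - 2 * α * x - β) * (γ * x ^ 2 - s₀ * γ * x + (β + s₀ * α))
          / (γ * x - α) ^ 2)
        / Real.sqrt |(x - a₀) * (x - b₀) * (x - a₁) * (x - b₁)|) volume a₀ b₀ := by
    apply band0_int a₀ b₀ a₁ b₁ h₀ h₁ h₂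
    · exact Measurable.div (by fun_prop) (by fun_prop)
    · exact ContinuousOn.div (by fun_prop) (by fun_prop)
        (fun x hx => pow_ne_zero _ (hd x hx).ne')
  have hcontH : ContinuousOn H (Icc a₀ b₀) := by
    rw [hH]
    exact ContinuousOn.div
      ((continuous_const.mul (Real.continuous_sqrt.comp (by continuity))).continuousOn)
      (by fun_prop) (fun x hx => (hd x hx).ne')
  have hderH : ∀ x ∈ Ioo a₀ b₀, HasDerivWithinAt H
      (((γ * x ^ 2 - 2 * α * x - β) * (γ * x ^ 2 - s₀ * γ * x + (β + s₀ * α))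
          / (γ * x - α) ^ 2)
        / Real.sqrt |(x - a₀) * (x - b₀) * (x - a₁) * (x - b₁)|) (Ioi x) x := by
    intro x hx
    obtain ⟨hx1, hx2⟩ := hx
    have hdx := hd x ⟨hx1.le, hx2.le⟩
    have f1 : 0 < x - a₀ := by linarith
    have f2 : 0 < b₀ - x := by linarith
    have f3 : 0 < a₁ - x := by linarith
    have f4 : 0 < b₁ - x := by linarith
    have hRneg : (x - a₀) * (x - b₀) * (x - a₁) * (x - b₁) < 0 := by
      nlinarith [mul_pos (mul_pos (mul_pos f1 f2) f3) f4]
    have hu : 0 < -((x - a₀) * (x - b₀) * (x - a₁) * (x - b₁)) := by linarith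
    have hprod := ((((hasDerivAt_id x).sub_const a₀).mul
      ((hasDerivAt_id x).sub_const b₀)).mul
      ((hasDerivAt_id x).sub_const a₁)).mul ((hasDerivAt_id x).sub_const b₁)
    have hRd : HasDerivAt (fun y : ℝ => -((y - a₀) * (y - b₀) * (y - a₁) * (y - b₁)))
        (-((x - b₀) * (x - a₁) * (x - b₁) + (x - a₀) * (x - a₁) * (x - b₁)
          + (x - a₀) * (x - b₀) * (x - b₁) + (x - a₀) * (x - b₀) * (x - a₁))) x := by
      convert hprod.neg using 1
      · rfl
      · rfl
      · rfl
      simp only [id_eq, Pi.mul_apply]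
      ring
    have hsqrt := hRd.sqrt hu.ne'
    have hnum := hsqrt.const_mul (-γ)
    have hden : HasDerivAt (fun y : ℝ => γ * y - α) γ x := by
      simpa using ((hasDerivAt_id x).const_mul γ).sub_const α
    have hHd := hnum.div hden hdx.ne'
    rw [hH]
    apply HasDerivAt.hasDerivWithinAt
    convert hHd using 1
    · rfl
    · rfl
    set u : ℝ := Real.sqrt (-((x - a₀) * (x - b₀) * (x - a₁) * (x - b₁))) with hudef
    have hupos : 0 < u := Real.sqrt_pos.2 hu
    have hu2 : u ^ 2 = -((x - a₀) * (x - b₀) * (x - a₁) * (x - b₁)) :=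
      Real.sq_sqrt hu.le
    have habsR : |(x - a₀) * (x - b₀) * (x - a₁) * (x - b₁)|
        = -((x - a₀) * (x - b₀) * (x - a₁) * (x - b₁)) := abs_of_neg hRneg
    rw [habsR, ← hudef]
    rw [div_eq_div_iff (by positivity) (by positivity)]
    rw [div_mul_cancel₀ _ (pow_ne_zero 2 hdx.ne')]
    set P : ℝ := -((x - b₀) * (x - a₁) * (x - b₁) + (x - a₀) * (x - a₁) * (x - b₁)
      + (x - a₀) * (x - b₀) * (x - b₁) + (x - a₀) * (x - b₀) * (x - a₁)) with hP
    have hnum_u : (-γ * (P / (2 * u)) * (γ * x - α) - -γ * u * γ) * u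
        = -(γ * (γ * x - α) * P) / 2 + γ ^ 2 * u ^ 2 := by
      field_simp
      ring
    rw [hnum_u, hu2, hP, hγ, hα, hβ, hs₀]
    ring
  have := integral_eq_sub_of_hasDeriv_right_of_le h₀.le hcontH hderH hint
  rw [this, hH]
  have z1 : -((a₀ - a₀) * (a₀ - b₀) * (a₀ - a₁) * (a₀ - b₁)) = 0 := by ring
  have z2 : -((b₀ - a₀) * (b₀ - b₀) * (b₀ - a₁) * (b₀ - b₁)) = 0 := by ring
  simp [z1, z2]


/-- Let `a₀ < b₀ < a₁ < b₁` and `R(x) = (x-a₀)(x-b₀)(x-a₁)(x-b₁)`. If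
`p(z) = (z-x₁)(z-x₂)` is a monic real quadratic satisfying
`∫_{a₀}^{b₀} p(x)/|R(x)|^{1/2} dx = 0` and `∫_{a₁}^{b₁} p(x)/|R(x)|^{1/2} dx = 0`, then
`x₁ + x₂ = (a₀ + b₀ + a₁ + b₁)/2`. -/
theorem sum_of_zeros_of_p (a₀ b₀ a₁ b₁ : ℝ) (h₀ : a₀ < b₀) (h₁ : b₀ < a₁) (h₂ : a₁ < b₁)
    (x₁ x₂ : ℝ)
    (hI₀ : (∫ x in a₀..b₀,
      (x - x₁) * (x - x₂) /
        Real.sqrt |(x - a₀) * (x - b₀) * (x - a₁) * (x - b₁)|) = 0)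
    (hI₁ : (∫ x in a₁..b₁,
      (x - x₁) * (x - x₂) /
        Real.sqrt |(x - a₀) * (x - b₀) * (x - a₁) * (x - b₁)|) = 0) :
    x₁ + x₂ = (a₀ + b₀ + a₁ + b₁) / 2 := by
  have hsub : (∫ x in a₁..b₁,
        (x - x₁) * (x - x₂) / Real.sqrt |(x - a₀) * (x - b₀) * (x - a₁) * (x - b₁)|)
      = ∫ x in a₀..b₀,
          (((a₀ * a₁ - b₀ * b₁) * x + (b₀ * b₁ * (a₀ + a₁) - a₀ * a₁ * (b₀ + b₁)))
              / ((a₀ + a₁ - b₀ - b₁) * x - (a₀ * a₁ - b₀ * b₁)) - x₁)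
            * (((a₀ * a₁ - b₀ * b₁) * x + (b₀ * b₁ * (a₀ + a₁) - a₀ * a₁ * (b₀ + b₁)))
              / ((a₀ + a₁ - b₀ - b₁) * x - (a₀ * a₁ - b₀ * b₁)) - x₂)
            / Real.sqrt |(x - a₀) * (x - b₀) * (x - a₁) * (x - b₁)| :=
    subst_int a₀ b₀ a₁ b₁ h₀ h₁ h₂ (fun y => (y - x₁) * (y - x₂))
  have hftc := ftc_zero a₀ b₀ a₁ b₁ h₀ h₁ h₂
  set α : ℝ := a₀ * a₁ - b₀ * b₁ with hα
  set γ : ℝ := a₀ + a₁ - b₀ - b₁ with hγ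
  set β : ℝ := b₀ * b₁ * (a₀ + a₁) - a₀ * a₁ * (b₀ + b₁) with hβ
  set s₀ : ℝ := (a₀ + b₀ + a₁ + b₁) / 2 with hs₀
  have hd : ∀ x ∈ Icc a₀ b₀, 0 < γ * x - α := by
    intro x hx
    obtain ⟨hx1, hx2⟩ := hx
    have e1 : (γ * x - α) * (b₀ - a₀)
        = (b₀ - x) * ((a₀ - b₀) * (a₀ - b₁)) + (x - a₀) * ((b₀ - a₀) * (a₁ - b₀)) := by
      rw [hγ, hα]; ring
    have p1 : 0 < (a₀ - b₀) * (a₀ - b₁) := by nlinarith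
    have p2 : 0 < (b₀ - a₀) * (a₁ - b₀) := by nlinarith
    nlinarith [mul_nonneg (by linarith : (0:ℝ) ≤ b₀ - x) p1.le,
      mul_nonneg (by linarith : (0:ℝ) ≤ x - a₀) p2.le]
  have hΔ : α ^ 2 + β * γ < 0 := by
    have e : α ^ 2 + β * γ = ((a₀ - b₀) * (a₀ - b₁)) * ((a₁ - b₀) * (a₁ - b₁)) := by
      rw [hα, hβ, hγ]; ring
    rw [e]
    have p1 : 0 < (a₀ - b₀) * (a₀ - b₁) := by nlinarith
    have p2 : (a₁ - b₀) * (a₁ - b₁) < 0 := by nlinarith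
    nlinarith
  clear_value α γ β s₀
  -- q₁ is negative everywhere
  have hγneg : γ < 0 := by rw [hγ]; linarith
  have hq₁ : ∀ x : ℝ, γ * x ^ 2 - 2 * α * x - β < 0 := by
    intro x
    have key : γ * (γ * x ^ 2 - 2 * α * x - β) = (γ * x - α) ^ 2 - (α ^ 2 + β * γ) := by
      ring
    nlinarith [sq_nonneg (γ * x - α)]
  -- integrabilities on the band (a₀, b₀)
  have intp : IntervalIntegrable (fun x =>
      (x - x₁) * (x - x₂) / Real.sqrt |(x - a₀) * (x - b₀) * (x - a₁) * (x - b₁)|)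
      volume a₀ b₀ :=
    band0_int a₀ b₀ a₁ b₁ h₀ h₁ h₂ _ (by fun_prop) (by fun_prop)
  have intpφ : IntervalIntegrable (fun x =>
      ((α * x + β) / (γ * x - α) - x₁) * ((α * x + β) / (γ * x - α) - x₂)
        / Real.sqrt |(x - a₀) * (x - b₀) * (x - a₁) * (x - b₁)|) volume a₀ b₀ := by
    apply band0_int a₀ b₀ a₁ b₁ h₀ h₁ h₂
    · exact Measurable.mul
        ((measurable_const.mul measurable_id').add_const β |>.div
          ((measurable_const.mul measurable_id').sub_const α) |>.sub_const x₁)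
        ((measurable_const.mul measurable_id').add_const β |>.div
          ((measurable_const.mul measurable_id').sub_const α) |>.sub_const x₂)
    · apply ContinuousOn.mul
      · exact (ContinuousOn.div (by fun_prop) (by fun_prop)
          (fun x hx => (hd x hx).ne')).sub continuousOn_const
      · exact (ContinuousOn.div (by fun_prop) (by fun_prop)
          (fun x hx => (hd x hx).ne')).sub continuousOn_const
  have intG₁ : IntervalIntegrable (fun x =>
      (γ * x ^ 2 - 2 * α * x - β) * (γ * x ^ 2 - s₀ * γ * x + (β + s₀ * α))
          / (γ * x - α) ^ 2
        / Real.sqrt |(x - a₀) * (x - b₀) * (x - a₁) * (x - b₁)|) volume a₀ b₀ := by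
    apply band0_int a₀ b₀ a₁ b₁ h₀ h₁ h₂
    · exact Measurable.div (by fun_prop) (by fun_prop)
    · exact ContinuousOn.div (by fun_prop) (by fun_prop)
        (fun x hx => pow_ne_zero _ (hd x hx).ne')
  have intG₂ : IntervalIntegrable (fun x =>
      (γ * x ^ 2 - 2 * α * x - β) / (γ * x - α)
        / Real.sqrt |(x - a₀) * (x - b₀) * (x - a₁) * (x - b₁)|) volume a₀ b₀ := by
    apply band0_int a₀ b₀ a₁ b₁ h₀ h₁ h₂
    · exact Measurable.div (by fun_prop) (by fun_prop)
    · exact ContinuousOn.div (by fun_prop) (by fun_prop) (fun x hx => (hd x hx).ne')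
  have intG₂c : IntervalIntegrable (fun x =>
      (s₀ - (x₁ + x₂)) * ((γ * x ^ 2 - 2 * α * x - β) / (γ * x - α))
        / Real.sqrt |(x - a₀) * (x - b₀) * (x - a₁) * (x - b₁)|) volume a₀ b₀ := by
    apply band0_int a₀ b₀ a₁ b₁ h₀ h₁ h₂
    · exact Measurable.mul measurable_const (Measurable.div (by fun_prop) (by fun_prop))
    · exact ContinuousOn.mul continuousOn_const
        (ContinuousOn.div (by fun_prop) (by fun_prop) (fun x hx => (hd x hx).ne'))
  -- the transformed second hypothesis
  have hI₁' : (∫ x in a₀..b₀,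
      ((α * x + β) / (γ * x - α) - x₁) * ((α * x + β) / (γ * x - α) - x₂)
        / Real.sqrt |(x - a₀) * (x - b₀) * (x - a₁) * (x - b₁)|) = 0 := by
    rw [← hsub]; exact hI₁
  -- difference of the two integrals
  have h8 : (∫ x in a₀..b₀,
      ((x - x₁) * (x - x₂) / Real.sqrt |(x - a₀) * (x - b₀) * (x - a₁) * (x - b₁)|
        - ((α * x + β) / (γ * x - α) - x₁) * ((α * x + β) / (γ * x - α) - x₂)
            / Real.sqrt |(x - a₀) * (x - b₀) * (x - a₁) * (x - b₁)|)) = 0 := by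
    rw [intervalIntegral.integral_sub intp intpφ, hI₀, hI₁', sub_zero]
  -- pointwise decomposition of the integrand
  have h9 : EqOn
      (fun x => ((x - x₁) * (x - x₂)
            / Real.sqrt |(x - a₀) * (x - b₀) * (x - a₁) * (x - b₁)|
        - ((α * x + β) / (γ * x - α) - x₁) * ((α * x + β) / (γ * x - α) - x₂)
            / Real.sqrt |(x - a₀) * (x - b₀) * (x - a₁) * (x - b₁)|))
      (fun x => ((γ * x ^ 2 - 2 * α * x - β) * (γ * x ^ 2 - s₀ * γ * x + (β + s₀ * α))
              / (γ * x - α) ^ 2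
            / Real.sqrt |(x - a₀) * (x - b₀) * (x - a₁) * (x - b₁)|
        + (s₀ - (x₁ + x₂)) * ((γ * x ^ 2 - 2 * α * x - β) / (γ * x - α))
            / Real.sqrt |(x - a₀) * (x - b₀) * (x - a₁) * (x - b₁)|))
      (uIcc a₀ b₀) := by
    intro x hx
    rw [uIcc_of_le h₀.le] at hx
    have hdx := hd x hx
    simp only
    rw [← sub_div, ← add_div]
    congr 1
    rw [div_sub' hdx.ne', div_sub' hdx.ne', div_mul_div_comm, mul_div_assoc', div_add_div _ _ (pow_ne_zero 2 hdx.ne') hdx.ne', sub_div' (mul_ne_zero hdx.ne' hdx.ne'), div_eq_div_iff (mul_ne_zero hdx.ne' hdx.ne') (mul_ne_zero (pow_ne_zero 2 hdx.ne') hdx.ne')]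
    ring
  have h10 : (∫ x in a₀..b₀,
      ((γ * x ^ 2 - 2 * α * x - β) * (γ * x ^ 2 - s₀ * γ * x + (β + s₀ * α))
              / (γ * x - α) ^ 2
            / Real.sqrt |(x - a₀) * (x - b₀) * (x - a₁) * (x - b₁)|
        + (s₀ - (x₁ + x₂)) * ((γ * x ^ 2 - 2 * α * x - β) / (γ * x - α))
            / Real.sqrt |(x - a₀) * (x - b₀) * (x - a₁) * (x - b₁)|)) = 0 := by
    rw [← intervalIntegral.integral_congr h9]
    exact h8
  rw [intervalIntegral.integral_add intG₁ intG₂c, hftc, zero_add] at h10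
  -- pull out the constant
  have h11 : (∫ x in a₀..b₀,
      (s₀ - (x₁ + x₂)) * ((γ * x ^ 2 - 2 * α * x - β) / (γ * x - α))
        / Real.sqrt |(x - a₀) * (x - b₀) * (x - a₁) * (x - b₁)|)
      = (s₀ - (x₁ + x₂)) * ∫ x in a₀..b₀,
          (γ * x ^ 2 - 2 * α * x - β) / (γ * x - α)
            / Real.sqrt |(x - a₀) * (x - b₀) * (x - a₁) * (x - b₁)| := by
    rw [← intervalIntegral.integral_const_mul]
    apply intervalIntegral.integral_congr
    intro x hx
    simp only
    ring
  rw [h11] at h10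
  -- the remaining integral is negative
  have hJ : (∫ x in a₀..b₀,
      (γ * x ^ 2 - 2 * α * x - β) / (γ * x - α)
        / Real.sqrt |(x - a₀) * (x - b₀) * (x - a₁) * (x - b₁)|) < 0 := by
    have hpos := intervalIntegral_pos_of_pos_on (intG₂.neg) (f := fun x =>
      -((γ * x ^ 2 - 2 * α * x - β) / (γ * x - α)
        / Real.sqrt |(x - a₀) * (x - b₀) * (x - a₁) * (x - b₁)|)) ?_ h₀
    · rw [intervalIntegral.integral_neg] at hpos
      linarith
    · intro x hx
      obtain ⟨hx1, hx2⟩ := hx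
      have hdx := hd x ⟨hx1.le, hx2.le⟩
      have hRneg : (x - a₀) * (x - b₀) * (x - a₁) * (x - b₁) < 0 := by
        have f1 : 0 < x - a₀ := by linarith
        have f2 : 0 < b₀ - x := by linarith
        have f3 : 0 < a₁ - x := by linarith
        have f4 : 0 < b₁ - x := by linarith
        nlinarith [mul_pos (mul_pos (mul_pos f1 f2) f3) f4]
      have hW : 0 < Real.sqrt |(x - a₀) * (x - b₀) * (x - a₁) * (x - b₁)| :=
        Real.sqrt_pos.2 (abs_pos.2 hRneg.ne)
      have hq := hq₁ x
      show 0 < -((γ * x ^ 2 - 2 * α * x - β) / (γ * x - α)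
        / Real.sqrt |(x - a₀) * (x - b₀) * (x - a₁) * (x - b₁)|)
      have e : -((γ * x ^ 2 - 2 * α * x - β) / (γ * x - α)
            / Real.sqrt |(x - a₀) * (x - b₀) * (x - a₁) * (x - b₁)|)
          = (-(γ * x ^ 2 - 2 * α * x - β)) / (γ * x - α)
            / Real.sqrt |(x - a₀) * (x - b₀) * (x - a₁) * (x - b₁)| := by
        ring
      rw [e]
      exact div_pos (div_pos (by linarith) hdx) hW
  have h12 : s₀ - (x₁ + x₂) = 0 := by
    rcases mul_eq_zero.1 h10 with h | h
    · exact h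
    · exact absurd h hJ.ne
  rw [hs₀] at h12
  linarith
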